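/- arXiv:2209.11466 — 3 statements merged into one kernel-verified Lean document; each statement's English description precedes it below -/
import Mathlib

section
/- Let Â ∈ ℝ^{n×n} be a Hurwitz matrix (all eigenvalues have negative real part), and let α, β > 0 be such that ‖e^{Ât}‖ ≤ α e^{−βt} for all t ≥ 0. Suppose Δ : [0,∞) → 𝕊^n is continuously differentiable with Δ(0) bounded, satisfying Δ'(t) = Δ(t)Â + ÂᵀΔ(t) + f(t) where ‖f(t)‖ ≤ ρ(‖Δ(t)‖² + α e^{−3βt}) for some ρ > 0, and Δ(t) → 0 as t → ∞. Then there exist constants K, λ > 0 such that ‖Δ(t)‖ ≤ K e^{−λt} for all t ≥ 0. -/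
open Matrix

attribute [local instance] Matrix.linftyOpNormedAddCommGroup Matrix.linftyOpNormedSpace

section helpers

open NormedSpace
open scoped NNReal
attribute [local instance] Matrix.linftyOpNormedRing Matrix.linftyOpNormedAlgebra

theorem stmt6_gb_le {δ K ε x : ℝ} (hK : 0 ≤ K) (hε : 0 ≤ ε) :
    gronwallBound δ K ε x ≤ (δ + ε * x) * Real.exp (K * x) := by
  by_cases hK0 : K = 0
  · subst hK0
    rw [gronwallBound_K0]
    simp only [zero_mul, Real.exp_zero, mul_one]
    exact le_refl _
  · have hKpos : 0 < K := lt_of_le_of_ne hK (Ne.symm hK0)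
    rw [gronwallBound_of_K_ne_0 hK0]
    have h1 : Real.exp (K * x) - 1 ≤ K * x * Real.exp (K * x) := by
      have h2 : 1 - K * x ≤ Real.exp (-(K * x)) := by
        have := Real.add_one_le_exp (-(K * x))
        linarith
      have h3 : Real.exp (-(K * x)) * Real.exp (K * x) = 1 := by
        rw [← Real.exp_add]; simp
      nlinarith [Real.exp_pos (K * x)]
    have h4 : ε / K * (Real.exp (K * x) - 1) ≤ ε * x * Real.exp (K * x) := by
      rw [div_mul_eq_mul_div, div_le_iff₀ hKpos]
      calc ε * (Real.exp (K * x) - 1) ≤ ε * (K * x * Real.exp (K * x)) := by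
            apply mul_le_mul_of_nonneg_left h1 hε
        _ = ε * x * Real.exp (K * x) * K := by ring
    nlinarith [Real.exp_pos (K * x)]

theorem stmt6_seq_decay (a : ℕ → ℝ) (C r : ℝ) (ha : ∀ k, 0 ≤ a k) (hC : 0 ≤ C)
    (hr : 1 / 2 < r)
    (hstep : ∀ k, a (k + 1) ≤ 1 / 2 * a k + C * r ^ k) :
    ∀ k, a k ≤ (a 0 + C / (r - 1 / 2)) * r ^ k := by
  have hr2 : 0 < r - 1 / 2 := by linarith
  have hrpos : 0 < r := by linarith
  intro k
  induction k with
  | zero =>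
    simpa using by nlinarith [div_nonneg hC hr2.le]
  | succ k ih =>
    have hrk : (0 : ℝ) ≤ r ^ k := by positivity
    have hcancel : C / (r - 1 / 2) * (r - 1 / 2) = C := div_mul_cancel₀ _ hr2.ne'
    calc a (k + 1) ≤ 1 / 2 * a k + C * r ^ k := hstep k
      _ ≤ 1 / 2 * ((a 0 + C / (r - 1 / 2)) * r ^ k) + C * r ^ k := by
          nlinarith [ih]
      _ ≤ (a 0 + C / (r - 1 / 2)) * r ^ (k + 1) := by
          have hkey : 1 / 2 * (a 0 + C / (r - 1 / 2)) + C ≤ (a 0 + C / (r - 1 / 2)) * r := by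
            nlinarith [mul_nonneg (ha 0) hr2.le, hcancel]
          have := mul_le_mul_of_nonneg_right hkey hrk
          rw [pow_succ]
          nlinarith [this]

theorem stmt6_norm_transpose_le (n : ℕ) (M : Matrix (Fin n) (Fin n) ℝ) :
    ‖Mᵀ‖ ≤ ((n : ℝ) + 1) * ‖M‖ := by
  have h : ‖Mᵀ‖₊ ≤ (n : ℝ≥0) * ‖M‖₊ := by
    rw [Matrix.linfty_opNNNorm_def]
    apply Finset.sup_le
    intro j _
    calc ∑ i, ‖Mᵀ j i‖₊ ≤ ∑ _i : Fin n, ‖M‖₊ := by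
          apply Finset.sum_le_sum
          intro i _
          calc ‖Mᵀ j i‖₊ = ‖M i j‖₊ := rfl
            _ ≤ ∑ j', ‖M i j'‖₊ :=
                Finset.single_le_sum (f := fun j' => ‖M i j'‖₊) (fun _ _ => zero_le)
                  (Finset.mem_univ j)
            _ ≤ ‖M‖₊ := by
                rw [Matrix.linfty_opNNNorm_def]
                exact Finset.le_sup (f := fun i => ∑ j', ‖M i j'‖₊) (Finset.mem_univ i)
      _ = (n : ℝ≥0) * ‖M‖₊ := by simp [mul_comm]
  have h2 := (NNReal.coe_le_coe.mpr h)
  push_cast at h2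
  calc ‖Mᵀ‖ ≤ (n : ℝ) * ‖M‖ := h2
    _ ≤ ((n : ℝ) + 1) * ‖M‖ := by nlinarith [norm_nonneg M]

theorem stmt6_norm_exp_le (n : ℕ) (M : Matrix (Fin n) (Fin n) ℝ) :
    ‖exp M‖ ≤ Real.exp ‖M‖ := by
  have hone : ‖(1 : Matrix (Fin n) (Fin n) ℝ)‖ ≤ 1 := by
    have h1 : (1 : Matrix (Fin n) (Fin n) ℝ) = Matrix.diagonal 1 := (Matrix.diagonal_one).symm
    rw [h1, Matrix.linfty_opNorm_diagonal]
    apply pi_norm_le_iff_of_nonneg zero_le_one |>.mpr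
    intro i; simp
  have hb : ∀ k : ℕ, ‖(k.factorial : ℝ)⁻¹ • M ^ k‖ ≤ ‖M‖ ^ k / k.factorial := by
    intro k
    rw [norm_smul, norm_inv, Real.norm_natCast]
    rcases Nat.eq_zero_or_pos k with hk | hk
    · subst hk
      simp only [Nat.factorial_zero, Nat.cast_one, inv_one, one_mul, _root_.pow_zero]
      rw [div_one]
      exact hone
    · rw [div_eq_inv_mul]
      exact mul_le_mul_of_nonneg_left (norm_pow_le' M hk) (by positivity)
  have hs : Summable fun k : ℕ => ‖(k.factorial : ℝ)⁻¹ • M ^ k‖ :=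
    Summable.of_nonneg_of_le (fun k => norm_nonneg _) hb (Real.summable_pow_div_factorial ‖M‖)
  rw [exp_eq_tsum ℝ]
  calc ‖∑' k : ℕ, (k.factorial : ℝ)⁻¹ • M ^ k‖ ≤ ∑' k : ℕ, ‖(k.factorial : ℝ)⁻¹ • M ^ k‖ :=
        norm_tsum_le_tsum_norm hs
    _ ≤ ∑' k : ℕ, ‖M‖ ^ k / k.factorial :=
        Summable.tsum_le_tsum hb hs (Real.summable_pow_div_factorial ‖M‖)
    _ = Real.exp ‖M‖ := by rw [Real.exp_eq_exp_ℝ, exp_eq_tsum_div]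

theorem stmt6_psi_deriv (n : ℕ) (A : Matrix (Fin n) (Fin n) ℝ)
    (Δ f : ℝ → Matrix (Fin n) (Fin n) ℝ) (c r : ℝ)
    (hd : HasDerivAt Δ (Δ r * A + Aᵀ * Δ r + f r) r) :
    HasDerivAt (fun u => exp ((c - u) • Aᵀ) * Δ u * exp ((c - u) • A))
      (exp ((c - r) • Aᵀ) * f r * exp ((c - r) • A)) r := by
  have h2 : HasDerivAt (fun u : ℝ => c - u) (-1) r := (hasDerivAt_id r).const_sub c
  have hQ : HasDerivAt (fun u : ℝ => exp ((c - u) • Aᵀ)) (-(Aᵀ * exp ((c - r) • Aᵀ))) r := by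
    have h1 := hasDerivAt_exp_smul_const' (𝕂 := ℝ) Aᵀ (c - r)
    have h3 := h1.scomp r h2
    simp only [Function.comp_def, neg_one_smul] at h3
    exact h3
  have hP : HasDerivAt (fun u : ℝ => exp ((c - u) • A)) (-(exp ((c - r) • A) * A)) r := by
    have h1 := hasDerivAt_exp_smul_const (𝕂 := ℝ) A (c - r)
    have h3 := h1.scomp r h2
    simp only [Function.comp_def, neg_one_smul] at h3
    exact h3
  have h := (hQ.mul hd).mul hP
  refine h.congr_deriv ?_
  have hc1 : Aᵀ * exp ((c - r) • Aᵀ) = exp ((c - r) • Aᵀ) * Aᵀ :=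
    (((Commute.refl Aᵀ).smul_right (c - r)).exp_right).eq
  have hc2 : exp ((c - r) • A) * A = A * exp ((c - r) • A) :=
    ((((Commute.refl A).smul_right (c - r)).exp_right).eq).symm
  rw [hc1, hc2]
  simp only [Pi.mul_apply]
  noncomm_ring

end helpers

set_option maxHeartbeats 4000000 in
/-- If `Â` is Hurwitz with `‖e^{Ât}‖ ≤ α e^{−βt}`, and the symmetric matrix
function `Δ` satisfies `Δ' = ΔÂ + ÂᵀΔ + f` with `‖f(t)‖ ≤ ρ(‖Δ(t)‖² + α e^{−3βt})` and
`Δ(t) → 0`, then `Δ` decays exponentially. -/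
theorem stmt6 (n : ℕ) (A : Matrix (Fin n) (Fin n) ℝ)
    (hHurwitz : ∀ μ ∈ spectrum ℂ (A.map (Complex.ofReal : ℝ → ℂ)), μ.re < 0)
    (α β ρ : ℝ) (hα : 0 < α) (hβ : 0 < β) (hρ : 0 < ρ)
    (hexp : ∀ t : ℝ, 0 ≤ t → ‖NormedSpace.exp (t • A)‖ ≤ α * Real.exp (-β * t))
    (Δ f : ℝ → Matrix (Fin n) (Fin n) ℝ)
    (hsymm : ∀ t, (Δ t).IsSymm)
    (hderiv : ∀ t : ℝ, 0 ≤ t → HasDerivAt Δ (Δ t * A + Aᵀ * Δ t + f t) t)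
    (hf : ∀ t : ℝ, 0 ≤ t → ‖f t‖ ≤ ρ * (‖Δ t‖ ^ 2 + α * Real.exp (-3 * β * t)))
    (hlim : Filter.Tendsto Δ Filter.atTop (nhds 0)) :
    ∃ K lam : ℝ, 0 < K ∧ 0 < lam ∧
      ∀ t : ℝ, 0 ≤ t → ‖Δ t‖ ≤ K * Real.exp (-lam * t) := by
  letI instR : NormedRing (Matrix (Fin n) (Fin n) ℝ) := Matrix.linftyOpNormedRing
  letI instA : NormedAlgebra ℝ (Matrix (Fin n) (Fin n) ℝ) := Matrix.linftyOpNormedAlgebra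
  letI instQ : NormedAlgebra ℚ (Matrix (Fin n) (Fin n) ℝ) := NormedAlgebra.restrictScalars ℚ ℝ _
  clear hHurwitz hsymm
  set P : ℝ → Matrix (Fin n) (Fin n) ℝ := fun x => NormedSpace.exp (x • A) with hPdef
  set Q : ℝ → Matrix (Fin n) (Fin n) ℝ := fun x => NormedSpace.exp (x • Aᵀ) with hQdef
  obtain ⟨N, hNdef⟩ : ∃ N : ℝ, N = (n : ℝ) + 1 := ⟨_, rfl⟩
  have hN1 : 1 ≤ N := by
    rw [hNdef]
    have : (0:ℝ) ≤ (n:ℝ) := Nat.cast_nonneg n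
    linarith
  have hNpos : 0 < N := lt_of_lt_of_le one_pos hN1
  obtain ⟨a, hadef⟩ : ∃ a : ℝ, a = N * α := ⟨_, rfl⟩
  have hapos : 0 < a := by rw [hadef]; exact mul_pos hNpos hα
  have hQP : ∀ x : ℝ, Q x = (P x)ᵀ := by
    intro x
    rw [hQdef, hPdef]
    simp only
    rw [← Matrix.transpose_smul, Matrix.exp_transpose]
  have hPadd : ∀ x y : ℝ, P x * P y = P (x + y) := by
    intro x y
    rw [hPdef]
    simp only
    rw [add_smul]
    exact (NormedSpace.exp_add_of_commute (((Commute.refl A).smul_left x).smul_right y)).symm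
  have hQadd : ∀ x y : ℝ, Q x * Q y = Q (x + y) := by
    intro x y
    rw [hQdef]
    simp only
    rw [add_smul]
    exact (NormedSpace.exp_add_of_commute (((Commute.refl Aᵀ).smul_left x).smul_right y)).symm
  have hP0 : P 0 = 1 := by rw [hPdef]; simp [NormedSpace.exp_zero]
  have hQ0 : Q 0 = 1 := by rw [hQdef]; simp [NormedSpace.exp_zero]
  have hPbound : ∀ x : ℝ, 0 ≤ x → ‖P x‖ ≤ α * Real.exp (-β * x) := fun x hx => hexp x hx
  have hPabs : ∀ x : ℝ, ‖P x‖ ≤ Real.exp (|x| * ‖A‖) := by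
    intro x
    calc ‖P x‖ ≤ Real.exp ‖x • A‖ := stmt6_norm_exp_le n _
      _ = Real.exp (|x| * ‖A‖) := by rw [norm_smul, Real.norm_eq_abs]
  have hQbound : ∀ x : ℝ, 0 ≤ x → ‖Q x‖ ≤ N * (α * Real.exp (-β * x)) := by
    intro x hx
    rw [hQP, hNdef]
    exact le_trans (stmt6_norm_transpose_le n _)
      (mul_le_mul_of_nonneg_left (hPbound x hx) (by positivity))
  have hQabs : ∀ x : ℝ, ‖Q x‖ ≤ N * Real.exp (|x| * ‖A‖) := by
    intro x
    rw [hQP, hNdef]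
    exact le_trans (stmt6_norm_transpose_le n _)
      (mul_le_mul_of_nonneg_left (hPabs x) (by positivity))
  have hΔc : ∀ t : ℝ, 0 ≤ t → ContinuousAt Δ t := fun t ht => (hderiv t ht).continuousAt
  -- choose window length L
  obtain ⟨L, hLdef⟩ : ∃ L : ℝ, L = max 1 (Real.log (4 * a ^ 2) / (2 * β)) := ⟨_, rfl⟩
  have hL1 : (1:ℝ) ≤ L := by rw [hLdef]; exact le_max_left _ _
  have hLpos : 0 < L := lt_of_lt_of_le one_pos hL1
  have hcontr : a ^ 2 * Real.exp (-2 * β * L) ≤ 1 / 4 := by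
    have h4a : (0:ℝ) < 4 * a ^ 2 := by positivity
    have hlog : Real.log (4 * a ^ 2) ≤ 2 * β * L := by
      have h : Real.log (4 * a ^ 2) / (2 * β) ≤ L := by
        rw [hLdef]; exact le_max_right _ _
      rw [div_le_iff₀ (by positivity)] at h
      calc Real.log (4 * a ^ 2) ≤ L * (2 * β) := h
        _ = 2 * β * L := by ring
    have hee : Real.exp (-2 * β * L) ≤ Real.exp (-Real.log (4 * a ^ 2)) := by
      apply Real.exp_le_exp.mpr; linarith
    calc a ^ 2 * Real.exp (-2 * β * L) ≤ a ^ 2 * Real.exp (-Real.log (4 * a ^ 2)) :=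
          mul_le_mul_of_nonneg_left hee (by positivity)
      _ = a ^ 2 * (4 * a ^ 2)⁻¹ := by rw [Real.exp_neg, Real.exp_log h4a]
      _ = 1 / 4 := by field_simp
  obtain ⟨c₁, hc1def⟩ : ∃ c₁ : ℝ, c₁ = N * Real.exp (2 * L * ‖A‖) := ⟨_, rfl⟩
  have hc1pos : 0 < c₁ := by rw [hc1def]; positivity
  obtain ⟨ε, hεdef⟩ : ∃ ε : ℝ, ε = Real.log 2 / (a ^ 2 * ρ * c₁ * L) := ⟨_, rfl⟩
  have hεpos : 0 < ε := by
    rw [hεdef]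
    apply div_pos (Real.log_pos one_lt_two)
    have := hapos
    positivity
  obtain ⟨Kc, hKcdef⟩ : ∃ Kc : ℝ, Kc = a ^ 2 * ρ * ε * c₁ := ⟨_, rfl⟩
  have hKcpos : 0 < Kc := by rw [hKcdef]; positivity
  have hKcL : Kc * L = Real.log 2 := by
    rw [hKcdef, hεdef]
    field_simp
  -- choose T from the limit
  obtain ⟨T₀, hT₀⟩ := Metric.tendsto_atTop.mp hlim ε hεpos
  obtain ⟨T, hTdef⟩ : ∃ T : ℝ, T = max T₀ 0 := ⟨_, rfl⟩
  have hT0 : (0:ℝ) ≤ T := by rw [hTdef]; exact le_max_right _ _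
  have hsmall : ∀ u : ℝ, T ≤ u → ‖Δ u‖ ≤ ε := by
    intro u hu
    have hu' : T₀ ≤ u := le_trans (by rw [hTdef]; exact le_max_left _ _) hu
    have h := hT₀ u hu'
    rw [dist_zero_right] at h
    exact h.le
  -- the key window estimate
  have key : ∀ s ℓ : ℝ, T ≤ s → 0 ≤ ℓ → ℓ ≤ L →
      ‖Δ (s + ℓ)‖ ≤ 2 * (a ^ 2 * Real.exp (-2 * β * ℓ) * ‖Δ s‖) +
        2 * (a ^ 2 * ρ * α * Real.exp (-3 * β * s) * L) := by
    intro s ℓ hTs hℓ0 hℓL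
    have hs0 : 0 ≤ s := le_trans hT0 hTs
    obtain ⟨c, hcdef⟩ : ∃ c : ℝ, c = s + ℓ := ⟨_, rfl⟩
    have hsc : s ≤ c := by rw [hcdef]; linarith
    set Ψ : ℝ → Matrix (Fin n) (Fin n) ℝ := fun u => Q (c - u) * Δ u * P (c - u) with hΨdef
    obtain ⟨δ, hδdef⟩ : ∃ δ : ℝ, δ = a ^ 2 * Real.exp (-2 * β * ℓ) * ‖Δ s‖ := ⟨_, rfl⟩
    obtain ⟨εg, hεgdef⟩ : ∃ εg : ℝ, εg = a ^ 2 * ρ * α * Real.exp (-3 * β * s) := ⟨_, rfl⟩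
    have hδ0 : 0 ≤ δ := by rw [hδdef]; positivity
    have hεg0 : 0 ≤ εg := by rw [hεgdef]; positivity
    have hgron : ∀ x ∈ Set.Icc s c, ‖Ψ x‖ ≤ gronwallBound δ Kc εg (x - s) := by
      apply norm_le_gronwallBound_of_norm_deriv_right_le
        (f' := fun u => Q (c - u) * f u * P (c - u))
      · -- continuity
        apply ContinuousOn.mul
        apply ContinuousOn.mul
        · exact (NormedSpace.exp_continuous.comp
            ((continuous_const.sub continuous_id).smul continuous_const)).continuousOn
        · exact fun u hu => (hΔc u (le_trans hs0 hu.1)).continuousWithinAt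
        · exact (NormedSpace.exp_continuous.comp
            ((continuous_const.sub continuous_id).smul continuous_const)).continuousOn
      · -- derivative
        intro u hu
        exact (stmt6_psi_deriv n A Δ f c u (hderiv u (le_trans hs0 hu.1))).hasDerivWithinAt
      · -- initial bound
        have e1 : c - s = ℓ := by rw [hcdef]; ring
        have hE : Real.exp (-β * ℓ) * Real.exp (-β * ℓ) = Real.exp (-2 * β * ℓ) := by
          rw [← Real.exp_add]; ring_nf
        have hbr : (0:ℝ) ≤ α ^ 2 * Real.exp (-2 * β * ℓ) * ‖Δ s‖ := by positivity
        calc ‖Ψ s‖ = ‖Q ℓ * Δ s * P ℓ‖ := by rw [hΨdef]; simp only; rw [e1]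
          _ ≤ ‖Q ℓ * Δ s‖ * ‖P ℓ‖ := norm_mul_le _ _
          _ ≤ ‖Q ℓ‖ * ‖Δ s‖ * ‖P ℓ‖ :=
              mul_le_mul_of_nonneg_right (norm_mul_le _ _) (norm_nonneg _)
          _ ≤ N * (α * Real.exp (-β * ℓ)) * ‖Δ s‖ * (α * Real.exp (-β * ℓ)) := by
              apply mul_le_mul _ (hPbound ℓ hℓ0) (norm_nonneg _) (by positivity)
              exact mul_le_mul_of_nonneg_right (hQbound ℓ hℓ0) (norm_nonneg _)
          _ = N * (α ^ 2 * (Real.exp (-β * ℓ) * Real.exp (-β * ℓ)) * ‖Δ s‖) := by ring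
          _ = N * (α ^ 2 * Real.exp (-2 * β * ℓ) * ‖Δ s‖) := by rw [hE]
          _ ≤ N * N * (α ^ 2 * Real.exp (-2 * β * ℓ) * ‖Δ s‖) := by
              nlinarith [mul_nonneg (mul_nonneg hNpos.le hbr) (by linarith : (0:ℝ) ≤ N - 1)]
          _ = δ := by rw [hδdef, hadef]; ring
      · -- norm of derivative bound
        intro u hu
        have hu0 : 0 ≤ u := le_trans hs0 hu.1
        have hcu : 0 ≤ c - u := by
          have := hu.2.le
          linarith
        have hΔε : ‖Δ u‖ ≤ ε := hsmall u (le_trans hTs hu.1)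
        have hQu : ‖Q (c - u)‖ ≤ N * α := by
          have h1 := hQbound (c - u) hcu
          have h2 : Real.exp (-β * (c - u)) ≤ 1 := by
            rw [show (1:ℝ) = Real.exp 0 by rw [Real.exp_zero]]
            apply Real.exp_le_exp.mpr
            nlinarith
          nlinarith [Real.exp_pos (-β * (c - u))]
        have hPu : ‖P (c - u)‖ ≤ α := by
          have h1 := hPbound (c - u) hcu
          have h2 : Real.exp (-β * (c - u)) ≤ 1 := by
            rw [show (1:ℝ) = Real.exp 0 by rw [Real.exp_zero]]
            apply Real.exp_le_exp.mpr
            nlinarith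
          nlinarith [Real.exp_pos (-β * (c - u))]
        -- recovery bound
        have hrec : ‖Δ u‖ ≤ c₁ * ‖Ψ u‖ := by
          have hid : Q (u - c) * Ψ u * P (u - c) = Δ u := by
            rw [hΨdef]
            simp only
            calc Q (u - c) * (Q (c - u) * Δ u * P (c - u)) * P (u - c)
                = Q (u - c) * Q (c - u) * Δ u * (P (c - u) * P (u - c)) := by noncomm_ring
              _ = Q (u - c + (c - u)) * Δ u * P (c - u + (u - c)) := by rw [hQadd, hPadd]
              _ = Q 0 * Δ u * P 0 := by rw [show u - c + (c - u) = 0 by ring,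
                    show c - u + (u - c) = 0 by ring]
              _ = Δ u := by rw [hQ0, hP0, one_mul, mul_one]
          have habs : |u - c| ≤ L := by
            rw [abs_of_nonpos (by linarith)]
            have h1 := hu.1
            have h2 : c - u ≤ ℓ := by rw [hcdef]; linarith
            linarith
          have hAx : |u - c| * ‖A‖ ≤ L * ‖A‖ :=
            mul_le_mul_of_nonneg_right habs (norm_nonneg _)
          have hE1 : Real.exp (|u - c| * ‖A‖) ≤ Real.exp (L * ‖A‖) := Real.exp_le_exp.mpr hAx
          have hEE : Real.exp (L * ‖A‖) * Real.exp (L * ‖A‖) = Real.exp (2 * L * ‖A‖) := by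
            rw [← Real.exp_add]; ring_nf
          calc ‖Δ u‖ = ‖Q (u - c) * Ψ u * P (u - c)‖ := by rw [hid]
            _ ≤ ‖Q (u - c) * Ψ u‖ * ‖P (u - c)‖ := norm_mul_le _ _
            _ ≤ ‖Q (u - c)‖ * ‖Ψ u‖ * ‖P (u - c)‖ :=
                mul_le_mul_of_nonneg_right (norm_mul_le _ _) (norm_nonneg _)
            _ ≤ N * Real.exp (|u - c| * ‖A‖) * ‖Ψ u‖ * Real.exp (|u - c| * ‖A‖) := by
                apply mul_le_mul _ (hPabs (u - c)) (norm_nonneg _) (by positivity)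
                exact mul_le_mul_of_nonneg_right (hQabs (u - c)) (norm_nonneg _)
            _ ≤ N * Real.exp (L * ‖A‖) * ‖Ψ u‖ * Real.exp (L * ‖A‖) := by
                have hΨ0 : (0:ℝ) ≤ ‖Ψ u‖ := norm_nonneg _
                gcongr <;> positivity
            _ = N * (Real.exp (L * ‖A‖) * Real.exp (L * ‖A‖)) * ‖Ψ u‖ := by ring
            _ = c₁ * ‖Ψ u‖ := by rw [hEE, hc1def]
        have hfu := hf u hu0
        have hsq : ‖Δ u‖ ^ 2 ≤ ε * ‖Δ u‖ := by nlinarith [norm_nonneg (Δ u)]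
        have hexps : Real.exp (-3 * β * u) ≤ Real.exp (-3 * β * s) := by
          apply Real.exp_le_exp.mpr
          nlinarith [hu.1]
        have hfu2 : ‖f u‖ ≤ ρ * (ε * ‖Δ u‖ + α * Real.exp (-3 * β * s)) := by
          calc ‖f u‖ ≤ ρ * (‖Δ u‖ ^ 2 + α * Real.exp (-3 * β * u)) := hfu
            _ ≤ ρ * (ε * ‖Δ u‖ + α * Real.exp (-3 * β * s)) := by
                apply mul_le_mul_of_nonneg_left _ hρ.le
                have := mul_le_mul_of_nonneg_left hexps hα.le
                linarith
        calc ‖Q (c - u) * f u * P (c - u)‖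
            ≤ ‖Q (c - u) * f u‖ * ‖P (c - u)‖ := norm_mul_le _ _
          _ ≤ ‖Q (c - u)‖ * ‖f u‖ * ‖P (c - u)‖ :=
              mul_le_mul_of_nonneg_right (norm_mul_le _ _) (norm_nonneg _)
          _ ≤ (N * α) * (ρ * (ε * ‖Δ u‖ + α * Real.exp (-3 * β * s))) * α := by
              apply mul_le_mul _ hPu (norm_nonneg _) (by positivity)
              apply mul_le_mul hQu hfu2 (norm_nonneg _) (by positivity)
          _ = N * α ^ 2 * ρ * ε * ‖Δ u‖ + N * α ^ 2 * ρ * α * Real.exp (-3 * β * s) := by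
              ring
          _ ≤ Kc * ‖Ψ u‖ + εg := by
              have hterm1 : N * α ^ 2 * ρ * ε * ‖Δ u‖ ≤ Kc * ‖Ψ u‖ := by
                calc N * α ^ 2 * ρ * ε * ‖Δ u‖ ≤ N * α ^ 2 * ρ * ε * (c₁ * ‖Ψ u‖) :=
                      mul_le_mul_of_nonneg_left hrec (by positivity)
                  _ ≤ N * N * α ^ 2 * ρ * ε * (c₁ * ‖Ψ u‖) := by
                      nlinarith [mul_nonneg (mul_nonneg (mul_nonneg (mul_nonneg
                        (mul_nonneg hNpos.le (sq_nonneg α)) hρ.le) hεpos.le)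
                        (mul_nonneg hc1pos.le (norm_nonneg (Ψ u))))
                        (by linarith : (0:ℝ) ≤ N - 1)]
                  _ = Kc * ‖Ψ u‖ := by rw [hKcdef, hadef]; ring
              have hterm2 : N * α ^ 2 * ρ * α * Real.exp (-3 * β * s) ≤ εg := by
                rw [hεgdef, hadef]
                nlinarith [mul_nonneg (mul_nonneg (mul_nonneg (mul_nonneg
                  (mul_nonneg hNpos.le (sq_nonneg α)) hρ.le) hα.le)
                  (Real.exp_pos (-3 * β * s)).le) (by linarith : (0:ℝ) ≤ N - 1)]
              linarith
    -- apply at c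
    have hΨc : Q (c - c) * Δ c * P (c - c) = Δ c := by
      rw [sub_self, hQ0, hP0, one_mul, mul_one]
    have hend := hgron c ⟨hsc, le_refl c⟩
    rw [hΨdef] at hend
    simp only at hend
    rw [hΨc] at hend
    have hcs : c - s = ℓ := by rw [hcdef]; ring
    rw [hcs] at hend
    have hgb := stmt6_gb_le (δ := δ) (K := Kc) (ε := εg) (x := ℓ) hKcpos.le hεg0
    have hexpKc : Real.exp (Kc * ℓ) ≤ 2 := by
      calc Real.exp (Kc * ℓ) ≤ Real.exp (Kc * L) := by
            apply Real.exp_le_exp.mpr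
            exact mul_le_mul_of_nonneg_left hℓL hKcpos.le
        _ = 2 := by rw [hKcL, Real.exp_log two_pos]
    have hfinal : (δ + εg * ℓ) * Real.exp (Kc * ℓ) ≤ (δ + εg * L) * 2 := by
      apply mul_le_mul _ hexpKc (Real.exp_pos _).le _
      · have := mul_le_mul_of_nonneg_left hℓL hεg0
        linarith
      · have := mul_le_mul_of_nonneg_left hℓ0 hεg0
        nlinarith [mul_le_mul_of_nonneg_left hℓL hεg0]
    have hΔcbound : ‖Δ c‖ ≤ (δ + εg * L) * 2 := le_trans hend (le_trans hgb hfinal)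
    rw [hδdef, hεgdef] at hΔcbound
    calc ‖Δ (s + ℓ)‖ = ‖Δ c‖ := by rw [hcdef]
      _ ≤ (a ^ 2 * Real.exp (-2 * β * ℓ) * ‖Δ s‖ + a ^ 2 * ρ * α * Real.exp (-3 * β * s) * L) * 2 :=
          hΔcbound
      _ = 2 * (a ^ 2 * Real.exp (-2 * β * ℓ) * ‖Δ s‖) +
          2 * (a ^ 2 * ρ * α * Real.exp (-3 * β * s) * L) := by ring
  -- step consequences
  obtain ⟨C, hCdef⟩ : ∃ C : ℝ, C = 2 * (a ^ 2 * ρ * α * L) := ⟨_, rfl⟩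
  have hC0 : 0 ≤ C := by rw [hCdef]; positivity
  have hstepL : ∀ s, T ≤ s → ‖Δ (s + L)‖ ≤ 1 / 2 * ‖Δ s‖ + C * Real.exp (-3 * β * s) := by
    intro s hTs
    have h := key s L hTs hLpos.le le_rfl
    have h2 : 2 * (a ^ 2 * Real.exp (-2 * β * L) * ‖Δ s‖) ≤ 1 / 2 * ‖Δ s‖ := by
      nlinarith [norm_nonneg (Δ s)]
    have h3 : 2 * (a ^ 2 * ρ * α * Real.exp (-3 * β * s) * L) = C * Real.exp (-3 * β * s) := by
      rw [hCdef]; ring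
    linarith
  have hstepAny : ∀ s, T ≤ s → ∀ ℓ, 0 ≤ ℓ → ℓ ≤ L →
      ‖Δ (s + ℓ)‖ ≤ 2 * a ^ 2 * ‖Δ s‖ + C * Real.exp (-3 * β * s) := by
    intro s hTs ℓ hℓ0 hℓL
    have h := key s ℓ hTs hℓ0 hℓL
    have hE1 : Real.exp (-2 * β * ℓ) ≤ 1 := by
      rw [show (1:ℝ) = Real.exp 0 by rw [Real.exp_zero]]
      apply Real.exp_le_exp.mpr
      nlinarith
    have h2 : 2 * (a ^ 2 * Real.exp (-2 * β * ℓ) * ‖Δ s‖) ≤ 2 * a ^ 2 * ‖Δ s‖ := by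
      nlinarith [mul_nonneg (mul_nonneg (sq_nonneg a) (norm_nonneg (Δ s)))
        (by linarith : (0:ℝ) ≤ 1 - Real.exp (-2 * β * ℓ))]
    have h3 : 2 * (a ^ 2 * ρ * α * Real.exp (-3 * β * s) * L) = C * Real.exp (-3 * β * s) := by
      rw [hCdef]; ring
    linarith
  -- geometric decay along the grid
  obtain ⟨r, hrdef⟩ : ∃ r : ℝ, r = max (3 / 4) (Real.exp (-3 * β * L)) := ⟨_, rfl⟩
  have hr34 : (3/4 : ℝ) ≤ r := by rw [hrdef]; exact le_max_left _ _
  have hr12 : (1/2 : ℝ) < r := lt_of_lt_of_le (by norm_num) hr34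
  have hrpos : (0:ℝ) < r := by linarith
  have hr1 : r < 1 := by
    rw [hrdef]
    apply max_lt (by norm_num)
    apply Real.exp_lt_one_iff.mpr
    nlinarith
  have hrexp : Real.exp (-3 * β * L) ≤ r := by rw [hrdef]; exact le_max_right _ _
  have hexpgrid : ∀ k : ℕ, Real.exp (-3 * β * (T + k * L)) ≤ Real.exp (-3 * β * T) * r ^ k := by
    intro k
    have h1 : Real.exp (-3 * β * (T + k * L)) =
        Real.exp (-3 * β * T) * Real.exp (-3 * β * L) ^ k := by
      rw [show -3 * β * (T + k * L) = -3 * β * T + (k : ℝ) * (-3 * β * L) by ring,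
        Real.exp_add, ← Real.exp_nat_mul]
    rw [h1]
    exact mul_le_mul_of_nonneg_left (pow_le_pow_left₀ (Real.exp_pos _).le hrexp k)
      (Real.exp_pos _).le
  obtain ⟨B, hBdef⟩ : ∃ B : ℝ, B = ‖Δ T‖ + C * Real.exp (-3 * β * T) / (r - 1 / 2) := ⟨_, rfl⟩
  have hB0 : 0 ≤ B := by
    rw [hBdef]
    have h1 : (0:ℝ) ≤ C * Real.exp (-3 * β * T) / (r - 1/2) := by
      apply div_nonneg (mul_nonneg hC0 (Real.exp_pos _).le) (by linarith)
    linarith [norm_nonneg (Δ T)]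
  have hseq : ∀ k : ℕ, ‖Δ (T + k * L)‖ ≤ B * r ^ k := by
    have hmain := stmt6_seq_decay (fun k => ‖Δ (T + k * L)‖) (C * Real.exp (-3 * β * T)) r
      (fun k => norm_nonneg _) (mul_nonneg hC0 (Real.exp_pos _).le) hr12 ?_
    · intro k
      have h := hmain k
      simp only [Nat.cast_zero, zero_mul, add_zero] at h
      rw [hBdef]
      exact h
    · intro k
      have hTk : T ≤ T + k * L := le_add_of_nonneg_right (mul_nonneg (Nat.cast_nonneg k) hLpos.le)
      have h2 := hstepL (T + k * L) hTk
      have harg : T + (k + 1 : ℕ) * L = T + k * L + L := by push_cast; ring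
      rw [harg]
      refine le_trans h2 ?_
      have h3 : C * Real.exp (-3 * β * (T + k * L)) ≤ C * (Real.exp (-3 * β * T) * r ^ k) :=
        mul_le_mul_of_nonneg_left (hexpgrid k) hC0
      linarith
  -- bound on the compact initial interval
  obtain ⟨M, hM⟩ : ∃ M, ∀ t ∈ Set.Icc (0:ℝ) T, ‖Δ t‖ ≤ M :=
    IsCompact.exists_bound_of_continuousOn isCompact_Icc
      (fun t ht => (hΔc t ht.1).continuousWithinAt)
  obtain ⟨M', hM'def⟩ : ∃ M' : ℝ, M' = max M 0 := ⟨_, rfl⟩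
  have hM'0 : 0 ≤ M' := by rw [hM'def]; exact le_max_right _ _
  -- decay rate
  obtain ⟨lam, hlamdef⟩ : ∃ lam : ℝ, lam = -Real.log r / L := ⟨_, rfl⟩
  have hlogr : Real.log r < 0 := Real.log_neg hrpos hr1
  have hlampos : 0 < lam := by rw [hlamdef]; exact div_pos (neg_pos.mpr hlogr) hLpos
  obtain ⟨D₁, hD₁def⟩ : ∃ D₁ : ℝ, D₁ = 2 * a ^ 2 * B + C * Real.exp (-3 * β * T) := ⟨_, rfl⟩
  have hD₁0 : 0 ≤ D₁ := by
    rw [hD₁def]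
    have h1 : (0:ℝ) ≤ 2 * a ^ 2 * B := by positivity
    have h2 : (0:ℝ) ≤ C * Real.exp (-3 * β * T) := mul_nonneg hC0 (Real.exp_pos _).le
    linarith
  have hdecay : ∀ t, T ≤ t → ‖Δ t‖ ≤ D₁ / r * Real.exp (-lam * (t - T)) := by
    intro t ht
    have hx0 : 0 ≤ (t - T) / L := div_nonneg (by linarith) hLpos.le
    obtain ⟨k, hk1, hk2⟩ : ∃ k : ℕ, (k : ℝ) ≤ (t - T) / L ∧ (t - T) / L < k + 1 :=
      ⟨⌊(t - T) / L⌋₊, Nat.floor_le hx0, Nat.lt_floor_add_one _⟩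
    have hkL : (k : ℝ) * L ≤ t - T := by
      have := (le_div_iff₀ hLpos).mp hk1
      linarith
    have hkL2 : t - T < ((k : ℝ) + 1) * L := by
      have := (div_lt_iff₀ hLpos).mp hk2
      linarith
    have hs : T ≤ T + k * L := le_add_of_nonneg_right (mul_nonneg (Nat.cast_nonneg k) hLpos.le)
    have happ := hstepAny (T + k * L) hs (t - (T + k * L)) (by linarith) (by nlinarith)
    rw [show T + k * L + (t - (T + k * L)) = t by ring] at happ
    have h1 : ‖Δ t‖ ≤ D₁ * r ^ k := by
      calc ‖Δ t‖ ≤ 2 * a ^ 2 * ‖Δ (T + k * L)‖ + C * Real.exp (-3 * β * (T + k * L)) := happ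
        _ ≤ 2 * a ^ 2 * (B * r ^ k) + C * (Real.exp (-3 * β * T) * r ^ k) := by
            have t1 := mul_le_mul_of_nonneg_left (hseq k)
              (by positivity : (0:ℝ) ≤ 2 * a ^ 2)
            have t2 := mul_le_mul_of_nonneg_left (hexpgrid k) hC0
            linarith
        _ = D₁ * r ^ k := by rw [hD₁def]; ring
    have h2 : r ^ k ≤ 1 / r * Real.exp (-lam * (t - T)) := by
      have hrk : (r : ℝ) ^ k = Real.exp ((k : ℝ) * Real.log r) := by
        rw [Real.exp_nat_mul, Real.exp_log hrpos]
      have hk3 : (t - T) / L - 1 ≤ (k : ℝ) := by linarith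
      have hmono : (k : ℝ) * Real.log r ≤ ((t - T) / L - 1) * Real.log r :=
        mul_le_mul_of_nonpos_right hk3 hlogr.le
      have heq : ((t - T) / L - 1) * Real.log r = -Real.log r + -lam * (t - T) := by
        rw [hlamdef]
        field_simp
        ring
      calc r ^ k = Real.exp ((k : ℝ) * Real.log r) := hrk
        _ ≤ Real.exp (((t - T) / L - 1) * Real.log r) := Real.exp_le_exp.mpr hmono
        _ = Real.exp (-Real.log r) * Real.exp (-lam * (t - T)) := by rw [heq, Real.exp_add]
        _ = 1 / r * Real.exp (-lam * (t - T)) := by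
            rw [Real.exp_neg, Real.exp_log hrpos, one_div]
    calc ‖Δ t‖ ≤ D₁ * r ^ k := h1
      _ ≤ D₁ * (1 / r * Real.exp (-lam * (t - T))) := mul_le_mul_of_nonneg_left h2 hD₁0
      _ = D₁ / r * Real.exp (-lam * (t - T)) := by ring
  -- final constants
  refine ⟨(D₁ / r + M' + 1) * Real.exp (lam * T), lam, ?_, hlampos, ?_⟩
  · have h1 : 0 ≤ D₁ / r := div_nonneg hD₁0 hrpos.le
    have h2 : (0:ℝ) < D₁ / r + M' + 1 := by linarith
    exact mul_pos h2 (Real.exp_pos _)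
  · intro t ht
    have hsplit : Real.exp (lam * T) * Real.exp (-lam * t) = Real.exp (lam * (T - t)) := by
      rw [← Real.exp_add]; ring_nf
    rcases le_or_gt T t with hTt | htT
    · have h := hdecay t hTt
      have he : Real.exp (-lam * (t - T)) = Real.exp (lam * T) * Real.exp (-lam * t) := by
        rw [← Real.exp_add]; ring_nf
      rw [he] at h
      have h1 : 0 ≤ D₁ / r := div_nonneg hD₁0 hrpos.le
      have hpos : (0:ℝ) < Real.exp (lam * T) * Real.exp (-lam * t) := by positivity
      calc ‖Δ t‖ ≤ D₁ / r * (Real.exp (lam * T) * Real.exp (-lam * t)) := h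
        _ ≤ (D₁ / r + M' + 1) * (Real.exp (lam * T) * Real.exp (-lam * t)) := by
            nlinarith
        _ = (D₁ / r + M' + 1) * Real.exp (lam * T) * Real.exp (-lam * t) := by ring
    · have hΔt : ‖Δ t‖ ≤ M' := by
        rw [hM'def]
        exact le_trans (hM t ⟨ht, htT.le⟩) (le_max_left _ _)
      have hge1 : (1:ℝ) ≤ Real.exp (lam * (T - t)) := by
        rw [show (1:ℝ) = Real.exp 0 by rw [Real.exp_zero]]
        apply Real.exp_le_exp.mpr
        nlinarith
      have h1 : 0 ≤ D₁ / r := div_nonneg hD₁0 hrpos.le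
      have hpos : (0:ℝ) < Real.exp (lam * T) * Real.exp (-lam * t) := by positivity
      calc ‖Δ t‖ ≤ M' := hΔt
        _ ≤ M' * Real.exp (lam * (T - t)) := by nlinarith
        _ = M' * (Real.exp (lam * T) * Real.exp (-lam * t)) := by rw [hsplit]
        _ ≤ (D₁ / r + M' + 1) * (Real.exp (lam * T) * Real.exp (-lam * t)) := by
            nlinarith
        _ = (D₁ / r + M' + 1) * Real.exp (lam * T) * Real.exp (-lam * t) := by ring
end

section
/- Let h : [s,∞) → [0,∞) be continuous and satisfy h(t) ≤ k + c ∫_s^t e^{−2β(r−s)} h(r)² dr for all t ≥ s, where k, c, β > 0 are constants with 1/k ≥ 1 + c/(2β). Then h(t) ≤ 1 for all t ≥ s. -/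
/-- Nonlinear Gronwall-type inequality: if `h ≥ 0` is continuous on `[s,∞)` and
`h(t) ≤ k + c ∫_s^t e^{−2β(r−s)} h(r)² dr` with `1/k ≥ 1 + c/(2β)`, then `h ≤ 1` on `[s,∞)`. -/
theorem stmt7 (s k c β : ℝ) (hk : 0 < k) (hc : 0 < c) (hβ : 0 < β)
    (hsmall : 1 + c / (2 * β) ≤ 1 / k)
    (h : ℝ → ℝ) (hcont : ContinuousOn h (Set.Ici s)) (hnn : ∀ t, 0 ≤ h t)
    (hineq : ∀ t ≥ s, h t ≤ k + c * ∫ r in s..t, Real.exp (-2 * β * (r - s)) * (h r) ^ 2) :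
    ∀ t ≥ s, h t ≤ 1 := by
  intro T hT
  set g : ℝ → ℝ := fun r => Real.exp (-2 * β * (r - s)) * (h r) ^ 2 with hg
  set φ : ℝ → ℝ := fun t => k + c * ∫ r in s..t, g r with hφ
  set ψ : ℝ → ℝ := fun t => -(φ t)⁻¹ + (c / (2 * β)) * Real.exp (-2 * β * (t - s)) with hψ
  have hgcont : ContinuousOn g (Set.Ici s) := by
    apply ContinuousOn.mul
    · exact (Real.continuous_exp.comp (by continuity)).continuousOn
    · exact hcont.pow 2
  have hgnn : ∀ r, 0 ≤ g r := fun r =>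
    mul_nonneg (Real.exp_pos _).le (sq_nonneg _)
  -- φ lower bound
  have hφk : ∀ t ≥ s, k ≤ φ t := by
    intro t ht
    have : 0 ≤ ∫ r in s..t, g r :=
      intervalIntegral.integral_nonneg ht (fun u _ => hgnn u)
    have := mul_nonneg hc.le this
    simp only [hφ]; linarith
  have hφpos : ∀ t ≥ s, 0 < φ t := fun t ht => lt_of_lt_of_le hk (hφk t ht)
  have hgint : MeasureTheory.IntegrableOn g (Set.uIcc s T) := by
    apply (hgcont.mono ?_).integrableOn_compact isCompact_uIcc
    rw [Set.uIcc_of_le hT]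
    exact fun x hx => hx.1
  -- continuity of ψ on Icc s T
  have hφcont : ContinuousOn φ (Set.Icc s T) := by
    apply continuousOn_const.add (continuousOn_const.mul ?_)
    have := intervalIntegral.continuousOn_primitive_interval hgint
    rwa [Set.uIcc_of_le hT] at this
  have hψcont : ContinuousOn ψ (Set.Icc s T) := by
    apply ContinuousOn.add
    · exact (hφcont.inv₀ (fun x hx => (hφpos x hx.1).ne')).neg
    · exact (continuous_const.mul (Real.continuous_exp.comp (by continuity))).continuousOn
  -- derivative on interior
  have hderiv : ∀ x ∈ Set.Ioo s T, HasDerivAt ψ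
      (c * g x / (φ x)^2 - c * Real.exp (-2 * β * (x - s))) x := by
    intro x hx
    have hxs : s < x := hx.1
    have hgcx : ContinuousAt g x :=
      (hgcont x (le_of_lt hxs)).continuousAt (Ici_mem_nhds hxs)
    have hint : IntervalIntegrable g MeasureTheory.volume s x := by
      apply hgint.intervalIntegrable.mono_set
      rw [Set.uIcc_of_le hT, Set.uIcc_of_le hxs.le]
      exact Set.Icc_subset_Icc le_rfl hx.2.le
    have hφd : HasDerivAt φ (c * g x) x := by
      have hsm : StronglyMeasurableAtFilter g (nhds x) MeasureTheory.volume :=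
        ContinuousAt.stronglyMeasurableAtFilter isOpen_Ioi
          (fun y hy => (hgcont y (le_of_lt hy)).continuousAt (Ici_mem_nhds hy)) x hxs
      have := intervalIntegral.integral_hasDerivAt_right hint hsm hgcx
      simpa [hφ] using (this.const_mul c).const_add k
    have hφne : φ x ≠ 0 := (hφpos x hxs.le).ne'
    have hinv : HasDerivAt (fun t => -(φ t)⁻¹) (c * g x / (φ x)^2) x := by
      have := (hφd.inv hφne).neg
      rw [show c * g x / (φ x)^2 = -(-(c * g x) / (φ x)^2) by ring]
      exact this
    have hexp : HasDerivAt (fun t => (c / (2 * β)) * Real.exp (-2 * β * (t - s)))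
        (-c * Real.exp (-2 * β * (x - s))) x := by
      have h1 : HasDerivAt (fun t : ℝ => -2 * β * (t - s)) (-2 * β) x := by
        simpa using ((hasDerivAt_id x).sub_const s).const_mul (-2 * β)
      have := (h1.exp).const_mul (c / (2 * β))
      rw [show -c * Real.exp (-2 * β * (x - s)) = c / (2 * β) * (Real.exp (-2 * β * (x - s)) * (-2 * β)) by
        rw [div_mul_eq_mul_div, eq_div_iff (by positivity)]; ring]
      exact this
    have := hinv.add hexp
    rw [show c * g x / (φ x)^2 - c * Real.exp (-2 * β * (x - s)) = c * g x / (φ x)^2 + -c * Real.exp (-2 * β * (x - s)) by ring]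
    exact this
  -- derivative is nonpositive
  have hψanti : AntitoneOn ψ (Set.Icc s T) := by
    apply antitoneOn_of_deriv_nonpos (convex_Icc s T) hψcont
    · intro x hx
      rw [interior_Icc] at hx
      exact (hderiv x hx).differentiableAt.differentiableWithinAt
    · intro x hx
      rw [interior_Icc] at hx
      rw [(hderiv x hx).deriv]
      have hxs : s ≤ x := hx.1.le
      have hhφ : h x ≤ φ x := hineq x hxs
      have hsq : (h x)^2 ≤ (φ x)^2 := pow_le_pow_left₀ (hnn x) hhφ 2
      have hφ2 : 0 < (φ x)^2 := pow_pos (hφpos x hxs) 2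
      have : c * g x / (φ x)^2 ≤ c * Real.exp (-2 * β * (x - s)) := by
        rw [div_le_iff₀ hφ2, hg]
        calc c * (Real.exp (-2 * β * (x - s)) * (h x)^2)
            ≤ c * (Real.exp (-2 * β * (x - s)) * (φ x)^2) := by
              apply mul_le_mul_of_nonneg_left (mul_le_mul_of_nonneg_left hsq (Real.exp_pos _).le) hc.le
          _ = c * Real.exp (-2 * β * (x - s)) * (φ x)^2 := by ring
      linarith
  -- conclude
  have hTs : ψ T ≤ ψ s := hψanti (Set.left_mem_Icc.2 hT) (Set.right_mem_Icc.2 hT) hT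
  have hψs : ψ s = -k⁻¹ + c / (2 * β) := by
    simp [hψ, hφ]
  have hφT : (φ T)⁻¹ ≥ 1 := by
    have h1 : ψ T = -(φ T)⁻¹ + (c / (2 * β)) * Real.exp (-2 * β * (T - s)) := rfl
    have h2 : 0 ≤ (c / (2 * β)) * Real.exp (-2 * β * (T - s)) :=
      mul_nonneg (div_nonneg hc.le (by linarith)) (Real.exp_pos _).le
    have h3 : c / (2 * β) ≤ 1 / k - 1 := by linarith
    have : -(φ T)⁻¹ ≤ -k⁻¹ + c / (2 * β) := by
      rw [hψs] at hTs; rw [h1] at hTs; linarith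
    have : -(φ T)⁻¹ ≤ -1 := by
      rw [one_div] at h3; linarith
    linarith
  have := hineq T hT
  have hφT1 : φ T ≤ 1 := by
    rw [ge_iff_le, le_inv_comm₀ one_pos (hφpos T hT)] at hφT
    simpa using hφT
  calc h T ≤ φ T := hineq T hT
    _ ≤ 1 := hφT1
end

section
/- Let v : [0,T] → [0,∞) be continuous and satisfy v(t) ≤ K(e^{−λt} + e^{−λ(T−t)}) + K ∫₀^t e^{−λ(T−s)} v(s) ds for all t ∈ [0,T], where K, λ > 0. Then there exist constants K', λ' > 0 depending only on K and λ (not on T) such that v(t) ≤ K'(e^{−λ' t} + e^{−λ'(T−t)}) for all t ∈ [0,T]. -/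
open Set MeasureTheory Real Topology

/-- Gronwall-type inequality with exponentially small kernel: if a nonnegative
continuous `v` on `[0,T]` satisfies
`v(t) ≤ K(e^{−λt} + e^{−λ(T−t)}) + K ∫₀^t e^{−λ(T−s)} v(s) ds`, then
`v(t) ≤ K'(e^{−λ't} + e^{−λ'(T−t)})` with `K', λ'` depending only on `K, λ`. -/
theorem stmt12 (K lam : ℝ) (hK : 0 < K) (hlam : 0 < lam) :
    ∃ K' lam' : ℝ, 0 < K' ∧ 0 < lam' ∧
      ∀ (T : ℝ), 0 ≤ T → ∀ v : ℝ → ℝ,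
        ContinuousOn v (Set.Icc 0 T) → (∀ t, 0 ≤ v t) →
        (∀ t ∈ Set.Icc (0 : ℝ) T,
          v t ≤ K * (Real.exp (-lam * t) + Real.exp (-lam * (T - t)))
                + K * ∫ s in (0 : ℝ)..t, Real.exp (-lam * (T - s)) * v s) →
        ∀ t ∈ Set.Icc (0 : ℝ) T,
          v t ≤ K' * (Real.exp (-lam' * t) + Real.exp (-lam' * (T - t))) := by
  have hMpos : (0:ℝ) < 2 * K * Real.exp (K / lam) := by positivity
  set M : ℝ := 2 * K * Real.exp (K / lam) with hMdef
  refine ⟨K + K * M / lam, lam, by positivity, hlam, ?_⟩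
  intro T hT v hv hv0 hineq
  -- kernel
  have hkc : Continuous (fun s : ℝ => Real.exp (-lam * (T - s))) := by fun_prop
  have hfc : ContinuousOn (fun s : ℝ => Real.exp (-lam * (T - s)) * v s) (Icc 0 T) :=
    hkc.continuousOn.mul hv
  set w : ℝ → ℝ := fun t => ∫ s in (0:ℝ)..t, Real.exp (-lam * (T - s)) * v s with hwdef
  -- integrating factor exponent
  set φ : ℝ → ℝ := fun t => (K / lam) * Real.exp (-lam * (T - t)) with hφdef
  have hφ_deriv : ∀ x : ℝ, HasDerivAt φ (K * Real.exp (-lam * (T - x))) x := by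
    intro x
    have h1 : HasDerivAt (fun t : ℝ => -lam * (T - t)) (-lam * -1) x :=
      ((hasDerivAt_id x).const_sub T).const_mul (-lam)
    have h2 := (h1.exp).const_mul (K / lam)
    refine h2.congr_deriv ?_
    rw [div_mul_eq_mul_div, div_eq_iff hlam.ne']
    ring
  have hφ_cont : Continuous φ := by fun_prop
  -- derivative of w at interior points
  have hw_deriv : ∀ x ∈ Ioo (0:ℝ) T,
      HasDerivAt w (Real.exp (-lam * (T - x)) * v x) x := by
    intro x hx
    have hsub : Set.uIcc (0:ℝ) x ⊆ Icc 0 T := by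
      rw [uIcc_of_le hx.1.le]; exact Icc_subset_Icc le_rfl hx.2.le
    have hint : IntervalIntegrable (fun s => Real.exp (-lam * (T - s)) * v s) volume 0 x :=
      (hfc.mono hsub).intervalIntegrable
    have hmeas : StronglyMeasurableAtFilter
        (fun s => Real.exp (-lam * (T - s)) * v s) (𝓝 x) volume :=
      ContinuousOn.stronglyMeasurableAtFilter isOpen_Ioo (hfc.mono Ioo_subset_Icc_self) x hx
    have hca : ContinuousAt (fun s => Real.exp (-lam * (T - s)) * v s) x :=
      hfc.continuousAt (Icc_mem_nhds hx.1 hx.2)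
    exact intervalIntegral.integral_hasDerivAt_right hint hmeas hca
  -- continuity of w on Icc
  have hw_cont : ContinuousOn w (Icc 0 T) := by
    have hio : IntegrableOn (fun s => Real.exp (-lam * (T - s)) * v s) (Set.uIcc 0 T) volume := by
      rw [uIcc_of_le hT]
      exact hfc.integrableOn_Icc
    have := intervalIntegral.continuousOn_primitive_interval hio
    rwa [uIcc_of_le hT] at this
  -- pointwise bound v ≤ F on Icc
  have hvF : ∀ x ∈ Icc (0:ℝ) T, v x ≤ 2 * K + K * w x := by
    intro x hx
    have h := hineq x hx
    have e1 : Real.exp (-lam * x) ≤ 1 := exp_le_one_iff.mpr (by nlinarith [hx.1])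
    have e2 : Real.exp (-lam * (T - x)) ≤ 1 := exp_le_one_iff.mpr (by nlinarith [hx.2])
    have : K * (Real.exp (-lam * x) + Real.exp (-lam * (T - x))) ≤ 2 * K := by nlinarith
    calc v x ≤ _ := h
      _ ≤ 2 * K + K * w x := by rw [hwdef]; nlinarith
  -- the decreasing function G
  set G : ℝ → ℝ := fun t => (2 * K + K * w t) * Real.exp (-(φ t)) with hGdef
  have hG_deriv : ∀ x ∈ Ioo (0:ℝ) T,
      HasDerivAt G (K * (Real.exp (-lam * (T - x)) * v x) * Real.exp (-(φ x))
        + (2 * K + K * w x) * (Real.exp (-(φ x)) * (-(K * Real.exp (-lam * (T - x)))))) x := by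
    intro x hx
    have hF : HasDerivAt (fun t => 2 * K + K * w t)
        (K * (Real.exp (-lam * (T - x)) * v x)) x :=
      ((hw_deriv x hx).const_mul K).const_add (2 * K)
    have hE : HasDerivAt (fun t => Real.exp (-(φ t)))
        (Real.exp (-(φ x)) * (-(K * Real.exp (-lam * (T - x))))) x :=
      ((hφ_deriv x).neg).exp
    exact hF.mul hE
  have hG_anti : AntitoneOn G (Icc 0 T) := by
    apply antitoneOn_of_deriv_nonpos (convex_Icc 0 T)
    · exact (continuousOn_const.add (continuousOn_const.mul hw_cont)).mul
        ((hφ_cont.neg.rexp).continuousOn)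
    · rw [interior_Icc]
      exact fun x hx => ((hG_deriv x hx).differentiableAt).differentiableWithinAt
    · rw [interior_Icc]
      intro x hx
      rw [(hG_deriv x hx).deriv]
      have hv2 : v x ≤ 2 * K + K * w x := hvF x (Ioo_subset_Icc_self hx)
      have hprod : K * Real.exp (-lam * (T - x)) * Real.exp (-(φ x))
          * (v x - (2 * K + K * w x)) ≤ 0 :=
        mul_nonpos_of_nonneg_of_nonpos (by positivity) (by linarith)
      nlinarith [hprod]
  -- uniform bound v ≤ M on Icc
  have hvM : ∀ t ∈ Icc (0:ℝ) T, v t ≤ M := by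
    intro t ht
    have hw0 : w 0 = 0 := intervalIntegral.integral_same
    have hG0 : G 0 ≤ 2 * K := by
      have : Real.exp (-(φ 0)) ≤ 1 := exp_le_one_iff.mpr (by
        have : (0:ℝ) ≤ φ 0 := by rw [hφdef]; positivity
        linarith)
      rw [hGdef]
      simp only [hw0, mul_zero, add_zero]
      nlinarith
    have hGt : G t ≤ 2 * K := le_trans (hG_anti (left_mem_Icc.mpr hT) ht ht.1) hG0
    have hwnn : 0 ≤ w t := by
      rw [hwdef]
      apply intervalIntegral.integral_nonneg ht.1
      intro s _
      exact mul_nonneg (Real.exp_nonneg _) (hv0 s)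
    have hφt : φ t ≤ K / lam := by
      have : Real.exp (-lam * (T - t)) ≤ 1 := exp_le_one_iff.mpr (by nlinarith [ht.2])
      rw [hφdef]
      nlinarith [div_pos hK hlam]
    have hFG : 2 * K + K * w t = G t * Real.exp (φ t) := by
      rw [hGdef, mul_assoc, ← Real.exp_add]
      simp
    have hGnn : 0 ≤ G t := by
      rw [hGdef]; positivity
    have hexp : Real.exp (φ t) ≤ Real.exp (K / lam) := Real.exp_le_exp.mpr hφt
    have hFt : 2 * K + K * w t ≤ M := by
      rw [hFG, hMdef]
      calc G t * Real.exp (φ t) ≤ 2 * K * Real.exp (K / lam) :=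
        mul_le_mul hGt hexp (Real.exp_nonneg _) (by positivity)
        _ = 2 * K * Real.exp (K / lam) := rfl
    exact le_trans (hvF t ht) hFt
  -- final estimate
  intro t ht
  have hineqt := hineq t ht
  -- bound the integral
  have hsub : Set.uIcc (0:ℝ) t ⊆ Icc 0 T := by
    rw [uIcc_of_le ht.1]; exact Icc_subset_Icc le_rfl ht.2
  have hint1 : IntervalIntegrable (fun s => Real.exp (-lam * (T - s)) * v s) volume 0 t :=
    (hfc.mono hsub).intervalIntegrable
  have hint2 : IntervalIntegrable (fun s => Real.exp (-lam * (T - s)) * M) volume 0 t :=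
    ((hkc.mul continuous_const).continuousOn).intervalIntegrable
  have hmono : (∫ s in (0:ℝ)..t, Real.exp (-lam * (T - s)) * v s)
      ≤ ∫ s in (0:ℝ)..t, Real.exp (-lam * (T - s)) * M := by
    apply intervalIntegral.integral_mono_on ht.1 hint1 hint2
    intro s hs
    have hsIcc : s ∈ Icc (0:ℝ) T := ⟨hs.1, le_trans hs.2 ht.2⟩
    exact mul_le_mul_of_nonneg_left (hvM s hsIcc) (Real.exp_nonneg _)
  have hcalc : (∫ s in (0:ℝ)..t, Real.exp (-lam * (T - s)))
      = Real.exp (-lam * (T - t)) / lam - Real.exp (-lam * (T - 0)) / lam := by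
    apply intervalIntegral.integral_eq_sub_of_hasDerivAt
    · intro s _
      have h1 : HasDerivAt (fun u : ℝ => -lam * (T - u)) (-lam * -1) s :=
        ((hasDerivAt_id s).const_sub T).const_mul (-lam)
      have h2 := (h1.exp).div_const lam
      refine h2.congr_deriv ?_
      rw [div_eq_iff hlam.ne']; ring
    · exact hkc.continuousOn.intervalIntegrable
  have hIM : (∫ s in (0:ℝ)..t, Real.exp (-lam * (T - s)) * M)
      = (Real.exp (-lam * (T - t)) / lam - Real.exp (-lam * (T - 0)) / lam) * M := by
    rw [intervalIntegral.integral_mul_const, hcalc]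
  have hbound : (∫ s in (0:ℝ)..t, Real.exp (-lam * (T - s)) * v s)
      ≤ Real.exp (-lam * (T - t)) / lam * M := by
    rw [hIM] at hmono
    have : (0:ℝ) ≤ Real.exp (-lam * (T - 0)) / lam * M := by positivity
    nlinarith [hmono]
  have ha : (0:ℝ) < Real.exp (-lam * t) := Real.exp_pos _
  have hb : (0:ℝ) < Real.exp (-lam * (T - t)) := Real.exp_pos _
  have hKM : (0:ℝ) < K * M / lam := by positivity
  calc v t ≤ K * (Real.exp (-lam * t) + Real.exp (-lam * (T - t)))
        + K * ∫ s in (0:ℝ)..t, Real.exp (-lam * (T - s)) * v s := hineqt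
    _ ≤ K * (Real.exp (-lam * t) + Real.exp (-lam * (T - t)))
        + K * (Real.exp (-lam * (T - t)) / lam * M) := by nlinarith [hbound]
    _ ≤ (K + K * M / lam) * (Real.exp (-lam * t) + Real.exp (-lam * (T - t))) := by
        have key : (K + K * M / lam) * (Real.exp (-lam * t) + Real.exp (-lam * (T - t)))
            = K * (Real.exp (-lam * t) + Real.exp (-lam * (T - t)))
              + (K * M / lam) * Real.exp (-lam * t)
              + K * (Real.exp (-lam * (T - t)) / lam * M) := by ring
        have hpos := mul_pos hKM ha
        linarith
end
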